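/- Let (n,m,k,l) be natural numbers with m ≤ n−m, k ≤ n, m+k−n ≤ l and l ≤ min(m,k), and assume l = 0 (so k ≤ n−m). Then for every integer x with 0 ≤ x ≤ m, the explicit Racah-presentation pmf satisfies p(x | n,m,k,0) = (C(n,x)/C(n,m)) · (C(k,x)/C(n−m,x)) · ((n−2x+1)/(n−x+1)) · C(n−k−x, n−m−k). In particular p(x | n,m,k,0) = 0 for k < x ≤ m. -/

import Mathlib

/-!
For `l = 0` the factors `(−m)_r` cancel and the Racah sum is a balanced (Saalschützian) `₃F₂`
at `1`. Rising factorials at negative integers are signed descending factorials, so after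
normalising by `C(n−m,x)·C(n−k,m)` its `r`-th term becomes
`(−1)^r C(n+1−x,r) C(n−m−r,x−r) C(n−k−r,m)`, and the Pfaff–Saalschütz identity sums these to
`C(k,x) C(n−k−x,m−x)`. That identity follows from two alternating Chu–Vandermonde sums, and
those are Vandermonde's convolution with a negative upper index (`Ring.choose`).
-/

open Finset

/-- Rising factorial `(a)_r = a(a+1)⋯(a+r−1)` in `ℚ`. -/
noncomputable def risingFac (a : ℚ) (r : ℕ) : ℚ := ∏ j ∈ Finset.range r, (a + j)

/-- The terminating `₄F₃`-hypergeometric (Racah polynomial) sum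
`∑_{r=0}^{min(x,M,N)} ((−x)_r (x−n−1)_r (−M)_r (−N)_r)/(r! (−m)_r (m−n)_r (−M−N)_r)`. -/
noncomputable def racahSum (n m M N x : ℕ) : ℚ :=
  ∑ r ∈ Finset.range (min x (min M N) + 1),
    risingFac (-(x : ℚ)) r * risingFac ((x : ℚ) - n - 1) r * risingFac (-(M : ℚ)) r *
        risingFac (-(N : ℚ)) r /
      ((r.factorial : ℚ) * risingFac (-(m : ℚ)) r * risingFac ((m : ℚ) - n) r *
        risingFac (-((M : ℚ) + N)) r)

/-- The explicit Racah-presentation probability mass function `p(x | n,m,k,l)`,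
with `M := m−l` and `N := n−m−k+l` (realized as `n+l-m-k` in `ℕ`). -/
noncomputable def racahPMF (n m k l x : ℕ) : ℚ :=
  ((n - k).choose (m - l) : ℚ) * ((n.choose x : ℚ) / (n.choose m : ℚ)) *
    (((n : ℚ) - 2 * x + 1) / ((n : ℚ) - x + 1)) *
    racahSum n m (m - l) (n + l - m - k) x

theorem risingFac_neg_natCast (a r : ℕ) :
    risingFac (-(a : ℚ)) r = (-1) ^ r * a.descFactorial r := by
  rw [risingFac, ← descPochhammer_eval_eq_descFactorial, descPochhammer_eval_eq_prod_range]
  simpa [neg_add_eq_sub] using prod_neg (s := range r) fun j : ℕ => (a : ℚ) - j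

theorem Nat.choose_mul_descFactorial {a b r : ℕ} (h : r ≤ b) :
    a.choose b * b.descFactorial r = a.descFactorial r * (a - r).choose (b - r) := by
  rw [descFactorial_eq_factorial_mul_choose, descFactorial_eq_factorial_mul_choose,
    mul_left_comm, Nat.choose_mul h, mul_assoc]

theorem alternating_vandermonde (P Q S : ℕ) (h : S ≤ Q) :
    ∑ j ∈ range (S + 1), (-1 : ℤ) ^ j * P.choose j * (Q - j).choose (S - j) =
      (-1) ^ S * Ring.choose ((P : ℤ) - Q + S - 1) S := by
  obtain ⟨c, rfl⟩ := Nat.exists_eq_add_of_le h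
  rw [show (P : ℤ) - ↑(S + c) + S - 1 = P + -(c + 1 : ℤ) by push_cast; ring,
    Ring.add_choose_eq S (Commute.all _ _), mul_sum,
    Nat.sum_antidiagonal_eq_sum_range_succ
      (fun j l => (-1) ^ S * (Ring.choose (P : ℤ) j * Ring.choose (-(c + 1 : ℤ)) l))]
  refine sum_congr rfl fun j hj => ?_
  obtain ⟨l, rfl⟩ := Nat.exists_eq_add_of_le (Nat.lt_succ_iff.1 (mem_range.1 hj))
  rw [Ring.choose_natCast, Ring.choose_neg, Units.smul_def, Int.coe_negOnePow_natCast,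
    Nat.add_sub_cancel_left, show j + l + c - j = c + l by omega,
    show (c + 1 : ℤ) + l - 1 = ((c + l : ℕ) : ℤ) by push_cast; ring, Ring.choose_natCast,
    smul_eq_mul, pow_add]
  ring_nf
  simp

theorem choose_sub_eq_alternating_sum {b r m : ℕ} (hmb : m ≤ b) (hrb : r ≤ b) :
    ((b - r).choose m : ℤ) =
      ∑ i ∈ range (m + 1), (-1 : ℤ) ^ i * r.choose i * (b - i).choose (m - i) := by
  rw [alternating_vandermonde r b m hmb,
    show (r : ℤ) - b + m - 1 = -((b - r - m + 1 : ℤ)) by ring, Ring.choose_neg, Units.smul_def,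
    Int.coe_negOnePow_natCast, smul_eq_mul,
    show (b - r - m + 1 : ℤ) + m - 1 = ((b - r : ℕ) : ℤ) by push_cast [hrb]; ring,
    Ring.choose_natCast, ← mul_assoc, ← pow_add, ← two_mul, pow_mul]
  simp

theorem alternating_vandermonde_mul_choose {P Q S i : ℕ} (hiP : i ≤ P) (hiS : i ≤ S)
    (hSQ : S ≤ Q) :
    ∑ r ∈ range (S + 1), (-1 : ℤ) ^ r * P.choose r * r.choose i * (Q - r).choose (S - r) =
      (-1) ^ S * P.choose i * Ring.choose ((P : ℤ) - Q + S - 1 - i) (S - i) := by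
  obtain ⟨s, rfl⟩ := Nat.exists_eq_add_of_le hiS
  rw [show i + s + 1 = i + (s + 1) by ring, sum_range_add,
    sum_eq_zero fun r hr => by rw [Nat.choose_eq_zero_of_lt (mem_range.1 hr)]; simp, zero_add]
  have key := alternating_vandermonde (P - i) (Q - i) s (by omega)
  rw [show ((P - i : ℕ) : ℤ) - ((Q - i : ℕ) : ℤ) + s - 1 = (P : ℤ) - Q + (i + s) - 1 - i by
    push_cast [hiP, show i ≤ Q by omega]; ring] at key
  calc _ = ∑ j ∈ range (s + 1), (-1 : ℤ) ^ i * P.choose i *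
          ((-1) ^ j * (P - i).choose j * (Q - i - j).choose (s - j)) := by
        refine sum_congr rfl fun j _ => ?_
        have h : (P.choose (i + j) * (i + j).choose i : ℤ) = P.choose i * (P - i).choose j := by
          have := Nat.choose_mul (n := P) (k := i + j) (s := i) (by omega)
          rw [Nat.add_sub_cancel_left] at this
          exact_mod_cast this
        rw [show Q - (i + j) = Q - i - j by omega, show i + s - (i + j) = s - j by omega, pow_add]
        linear_combination ((-1 : ℤ) ^ i * (-1) ^ j * ((Q - i - j).choose (s - j) : ℤ)) * h
    _ = _ := by rw [← mul_sum, key, Nat.add_sub_cancel_left]; push_cast; ring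

theorem saalschutz_choose {n m k x : ℕ} (hxm : x ≤ m) (hxn : x ≤ n - m) (hmk : m + k ≤ n) :
    ∑ r ∈ range (x + 1),
        (-1 : ℤ) ^ r * (n + 1 - x).choose r * (n - m - r).choose (x - r) * (n - k - r).choose m =
      k.choose x * (n - k - x).choose (m - x) := by
  set p := n + 1 - x
  have inner : ∀ i ∈ range (x + 1), ∑ r ∈ range (x + 1),
      (-1 : ℤ) ^ r * p.choose r * r.choose i * (n - m - r).choose (x - r) =
        (-1) ^ x * p.choose i * (m - i).choose (x - i) := by
    intro i hi
    have hix : i ≤ x := Nat.lt_succ_iff.1 (mem_range.1 hi)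
    rw [alternating_vandermonde_mul_choose (by omega) hix hxn,
      show (p : ℤ) - ↑(n - m) + x - 1 - i = ((m - i : ℕ) : ℤ) by omega, Ring.choose_natCast]
  have outer : ∀ i ∈ range (x + 1), ((n - k - i).choose (m - i) : ℤ) * (m - i).choose (x - i) =
      (n - k - x).choose (m - x) * (n - k - i).choose (x - i) := by
    intro i hi
    have hix : i ≤ x := Nat.lt_succ_iff.1 (mem_range.1 hi)
    have := Nat.choose_mul (n := n - k - i) (k := m - i) (s := x - i) (by omega)
    rw [show n - k - i - (x - i) = n - k - x by omega,
      show m - i - (x - i) = m - x by omega] at this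
    rw [mul_comm ((n - k - x).choose (m - x) : ℤ)]
    exact_mod_cast this
  calc _ = ∑ r ∈ range (x + 1), ∑ i ∈ range (m + 1),
          (-1 : ℤ) ^ i * (n - k - i).choose (m - i) *
            ((-1 : ℤ) ^ r * p.choose r * r.choose i * (n - m - r).choose (x - r)) := by
        refine sum_congr rfl fun r hr => ?_
        have hrx : r ≤ x := Nat.lt_succ_iff.1 (mem_range.1 hr)
        rw [choose_sub_eq_alternating_sum (b := n - k) (r := r) (by omega) (by omega), mul_sum]
        exact sum_congr rfl fun i _ => by ring
    _ = ∑ i ∈ range (x + 1), (-1 : ℤ) ^ i * (n - k - i).choose (m - i) *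
          ∑ r ∈ range (x + 1),
            (-1 : ℤ) ^ r * p.choose r * r.choose i * (n - m - r).choose (x - r) := by
        rw [sum_comm, ← sum_subset (range_subset_range.2 (by omega : x + 1 ≤ m + 1))]
        · simp only [mul_sum]
        · intro i _ hi
          rw [← mul_sum, sum_eq_zero fun r hr => ?_, mul_zero]
          rw [Nat.choose_eq_zero_of_lt (show r < i by simp at hr hi; omega)]
          simp
    _ = (-1) ^ x * (n - k - x).choose (m - x) *
          ∑ i ∈ range (x + 1), (-1 : ℤ) ^ i * p.choose i * (n - k - i).choose (x - i) := by
        rw [mul_sum]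
        refine sum_congr rfl fun i hi => ?_
        rw [inner i hi]
        linear_combination ((-1 : ℤ) ^ i * (-1) ^ x * p.choose i) * outer i hi
    _ = _ := by
        rw [alternating_vandermonde p (n - k) x (by omega),
          show (p : ℤ) - ↑(n - k) + x - 1 = k by omega, Ring.choose_natCast]
        ring_nf
        simp

theorem racahSum_summand_mul {n m k x r : ℕ} (hxm : x ≤ m) (hxn : x ≤ n - m) (hmk : m + k ≤ n)
    (hrx : r ≤ x) (hrN : r ≤ n - m - k) :
    risingFac (-(x : ℚ)) r * risingFac ((x : ℚ) - n - 1) r * risingFac (-(m : ℚ)) r *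
        risingFac (-((n - m - k : ℕ) : ℚ)) r /
      ((r.factorial : ℚ) * risingFac (-(m : ℚ)) r * risingFac ((m : ℚ) - n) r *
        risingFac (-((m : ℚ) + (n - m - k : ℕ))) r) * ((n - m).choose x * (n - k).choose m) =
      (-1) ^ r * (n + 1 - x).choose r * (n - m - r).choose (x - r) * (n - k - r).choose m := by
  rw [show (x : ℚ) - n - 1 = -((n + 1 - x : ℕ) : ℚ) by push_cast [show x ≤ n + 1 by omega]; ring,
    show (m : ℚ) - n = -((n - m : ℕ) : ℚ) by push_cast [show m ≤ n by omega]; ring,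
    show -((m : ℚ) + (n - m - k : ℕ)) = -((n - k : ℕ) : ℚ) by
      push_cast [show m ≤ n by omega, show k ≤ n - m by omega, show k ≤ n by omega]; ring]
  simp only [risingFac_neg_natCast]
  have e₁ : ((n + 1 - x).descFactorial r : ℚ) = r.factorial * (n + 1 - x).choose r := by
    exact_mod_cast Nat.descFactorial_eq_factorial_mul_choose _ _
  have e₂ : ((n - m).choose x * x.descFactorial r : ℚ) =
      (n - m).descFactorial r * (n - m - r).choose (x - r) := by
    exact_mod_cast Nat.choose_mul_descFactorial hrx
  have e₃ : ((n - k).choose m * (n - m - k).descFactorial r : ℚ) =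
      (n - k).descFactorial r * (n - k - r).choose m := by
    have := Nat.choose_mul_descFactorial (a := n - k) hrN
    rw [Nat.choose_symm_of_eq_add (show n - k = n - m - k + m by omega),
      Nat.choose_symm_of_eq_add (show n - k - r = n - m - k - r + m by omega)] at this
    exact_mod_cast this
  have hpos : ∀ a : ℕ, r ≤ a → (a.descFactorial r : ℚ) ≠ 0 := fun a h => by
    exact_mod_cast (Nat.descFactorial_pos.2 h).ne'
  have hm := hpos m (by omega)
  have hA := hpos (n - m) (by omega)
  have hB := hpos (n - k) (by omega)
  calc _ = (-1 : ℚ) ^ r * ((n + 1 - x).descFactorial r / r.factorial) *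
        ((n - m).choose x * x.descFactorial r / (n - m).descFactorial r) *
        ((n - k).choose m * (n - m - k).descFactorial r / (n - k).descFactorial r) := by
        field_simp
    _ = _ := by
        rw [e₁, e₂, e₃]
        field_simp

theorem racahSum_mul_choose_mul_choose {n m k x : ℕ} (hxm : x ≤ m) (hxn : x ≤ n - m)
    (hmk : m + k ≤ n) :
    racahSum n m m (n - m - k) x * ((n - m).choose x * (n - k).choose m) =
      k.choose x * (n - k - x).choose (m - x) := by
  rw [racahSum, sum_mul, show min x (min m (n - m - k)) = min x (n - m - k) by omega]
  calc _ = ∑ r ∈ range (min x (n - m - k) + 1), ((-1 : ℤ) ^ r * (n + 1 - x).choose r *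
          (n - m - r).choose (x - r) * (n - k - r).choose m : ℚ) := by
        refine sum_congr rfl fun r hr => ?_
        have hr' := Nat.lt_succ_iff.1 (mem_range.1 hr)
        exact racahSum_summand_mul hxm hxn hmk (by omega) (by omega)
    _ = ∑ r ∈ range (x + 1), ((-1 : ℤ) ^ r * (n + 1 - x).choose r *
          (n - m - r).choose (x - r) * (n - k - r).choose m : ℚ) := by
        refine sum_subset (range_subset_range.2 (by omega)) fun r hr hr' => ?_
        rw [Nat.choose_eq_zero_of_lt (show n - k - r < m by simp at hr hr'; omega)]
        simp
    _ = _ := by exact_mod_cast saalschutz_choose hxm hxn hmk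

theorem racahPMF_l_eq_zero_general (n m k : ℕ) (hm : 2 * m ≤ n) (hmk : m + k ≤ n) :
    (∀ x : ℕ, x ≤ m →
      racahPMF n m k 0 x
        = ((n.choose x : ℚ) / (n.choose m : ℚ)) * ((k.choose x : ℚ) / ((n - m).choose x : ℚ)) *
            (((n : ℚ) - 2 * x + 1) / ((n : ℚ) - x + 1)) * ((n - k - x).choose (n - m - k) : ℚ))
    ∧ (∀ x : ℕ, k < x → x ≤ m → racahPMF n m k 0 x = 0) := by
  have closed_form : ∀ x : ℕ, x ≤ m → racahPMF n m k 0 x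
      = ((n.choose x : ℚ) / (n.choose m : ℚ)) * ((k.choose x : ℚ) / ((n - m).choose x : ℚ)) *
          (((n : ℚ) - 2 * x + 1) / ((n : ℚ) - x + 1)) * ((n - k - x).choose (n - m - k) : ℚ) := by
    intro x hx
    have hS := racahSum_mul_choose_mul_choose hx (by omega) hmk
    have hC : ((n - m).choose x : ℚ) ≠ 0 := by exact_mod_cast (Nat.choose_pos (by omega)).ne'
    rw [racahPMF, Nat.sub_zero, Nat.add_zero,
      Nat.choose_symm_of_eq_add (show n - k - x = n - m - k + (m - x) by omega)]
    calc _ = (n.choose x : ℚ) / n.choose m * (((n : ℚ) - 2 * x + 1) / ((n : ℚ) - x + 1)) *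
          (racahSum n m m (n - m - k) x * ((n - m).choose x * (n - k).choose m)) /
            (n - m).choose x := by
          field_simp
      _ = _ := by
          rw [hS]
          ring
  refine ⟨closed_form, fun x hkx hxm => ?_⟩
  rw [closed_form x hxm, Nat.choose_eq_zero_of_lt hkx]
  simp

/-- **Closed form of the pmf in the case `l = 0`**:
`p(x | n,m,k,0) = (C(n,x)/C(n,m)) (C(k,x)/C(n−m,x)) ((n−2x+1)/(n−x+1)) C(n−k−x, n−m−k)`
for `0 ≤ x ≤ m`; in particular `p(x | n,m,k,0) = 0` for `k < x ≤ m`. -/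
theorem racahPMF_l_eq_zero (n m k : ℕ) (hm : 2 * m ≤ n) (hk : k ≤ n) (hmk : m + k ≤ n) :
    (∀ x : ℕ, x ≤ m →
      racahPMF n m k 0 x
        = ((n.choose x : ℚ) / (n.choose m : ℚ)) * ((k.choose x : ℚ) / ((n - m).choose x : ℚ)) *
            (((n : ℚ) - 2 * x + 1) / ((n : ℚ) - x + 1)) * ((n - k - x).choose (n - m - k) : ℚ))
    ∧ (∀ x : ℕ, k < x → x ≤ m → racahPMF n m k 0 x = 0) :=
  racahPMF_l_eq_zero_general n m k hm hmk
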